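/- Suppose for each j ∈ {1,...,q}, f_j(y_j|x) is a conditional density in ℒ*₁(𝕏) (a Gaussian-gated mixture of univariate Gaussians with input-independent expert means). Then the product f(y|x) = Π_{j=1}^{q} f_j(y_j|x), as a function of y = (y₁,...,y_q) ∈ ℝ^q and x ∈ 𝕏, belongs to ℒ*_q(𝕏), i.e., it can be written as Σ_{z=1}^{n} [π_z φ_p(x; μ_z, Σ_z) φ_q(y; a_z, C_z)] / [Σ_ζ π_ζ φ_p(x; μ_ζ, Σ_ζ)] for some n ∈ ℕ and valid parameters. -/

import Mathlib

open scoped Matrix BigOperators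

/-- The multivariate Gaussian density. -/
noncomputable def gaussPDF {ι : Type*} [Fintype ι] [DecidableEq ι] (μ : ι → ℝ)
    (S : Matrix ι ι ℝ) (x : ι → ℝ) : ℝ :=
  (Real.sqrt ((2 * Real.pi) ^ (Fintype.card ι) * S.det))⁻¹ *
    Real.exp (-(1 / 2) * ((x - μ) ⬝ᵥ (S⁻¹ *ᵥ (x - μ))))

/-- The univariate Gaussian density φ₁(y; a, σ²). -/
noncomputable def gaussPDF1 (a σsq y : ℝ) : ℝ :=
  (Real.sqrt (2 * Real.pi * σsq))⁻¹ * Real.exp (-(1 / 2) * ((y - a) ^ 2 / σsq))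

/-- Membership in ℒ*₁(𝕏): Gaussian-gated mixtures of univariate Gaussians with
input-independent expert means. -/
def MemLStarOne {p : ℕ} (𝕏 : Set (Fin p → ℝ)) (f : (Fin p → ℝ) → ℝ → ℝ) : Prop :=
  ∃ (n : ℕ) (π : Fin n → ℝ) (μ : Fin n → Fin p → ℝ)
    (S : Fin n → Matrix (Fin p) (Fin p) ℝ) (a : Fin n → ℝ) (σsq : Fin n → ℝ),
    0 < n ∧ (∀ z, 0 < π z) ∧ (∑ z, π z = 1) ∧ (∀ z, (S z).PosDef) ∧
    (∀ z, 0 < σsq z) ∧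
    ∀ x ∈ 𝕏, ∀ y : ℝ,
      f x y = ∑ z, (π z * gaussPDF (μ z) (S z) x * gaussPDF1 (a z) (σsq z) y) /
        (∑ ζ, π ζ * gaussPDF (μ ζ) (S ζ) x)

/-- Membership in ℒ*_q(𝕏). -/
def MemLStar {p q : ℕ} (𝕏 : Set (Fin p → ℝ)) (f : (Fin p → ℝ) → (Fin q → ℝ) → ℝ) : Prop :=
  ∃ (n : ℕ) (π : Fin n → ℝ) (μ : Fin n → Fin p → ℝ)
    (S : Fin n → Matrix (Fin p) (Fin p) ℝ) (a : Fin n → Fin q → ℝ)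
    (C : Fin n → Matrix (Fin q) (Fin q) ℝ),
    0 < n ∧ (∀ z, 0 < π z) ∧ (∑ z, π z = 1) ∧ (∀ z, (S z).PosDef) ∧
    (∀ z, (C z).PosDef) ∧
    ∀ x ∈ 𝕏, ∀ y : Fin q → ℝ,
      f x y = ∑ z, (π z * gaussPDF (μ z) (S z) x * gaussPDF (a z) (C z) y) /
        (∑ ζ, π ζ * gaussPDF (μ ζ) (S ζ) x)

/-!
Multiplying out the product of the `q` ratios turns numerator and denominator into sums over
multi-indices `z = (z₁, …, z_q)`. For each `z` the gating factor `∏ⱼ φ_p(x; μ_{j zⱼ}, Σ_{j zⱼ})`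
is, by completing the square, a positive constant times one Gaussian density whose precision
matrix is `∑ⱼ Σ_{j zⱼ}⁻¹`, and the expert factor `∏ⱼ φ₁(yⱼ; a_{j zⱼ}, σ²_{j zⱼ})` is the Gaussian
density with diagonal covariance. Absorbing the constants into the weights and normalising them
gives a member of `ℒ*_q`.
-/

open Matrix Finset

section CompletingTheSquare

variable {R ι κ : Type*} [CommRing R] [Fintype ι] [Fintype κ]

lemma dotProduct_mulVec_comm_of_isSymm {M : Matrix ι ι R} (hM : M.IsSymm) (u v : ι → R) :
    u ⬝ᵥ (M *ᵥ v) = v ⬝ᵥ (M *ᵥ u) := by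
  rw [dotProduct_mulVec, ← mulVec_transpose, hM.eq, dotProduct_comm]

lemma sub_dotProduct_mulVec_sub_of_isSymm {M : Matrix ι ι R} (hM : M.IsSymm) (u v : ι → R) :
    (u - v) ⬝ᵥ (M *ᵥ (u - v)) = u ⬝ᵥ (M *ᵥ u) - 2 * (u ⬝ᵥ (M *ᵥ v)) + v ⬝ᵥ (M *ᵥ v) := by
  rw [mulVec_sub, dotProduct_sub, sub_dotProduct, sub_dotProduct,
    dotProduct_mulVec_comm_of_isSymm hM v u]
  ring

lemma sum_sub_dotProduct_mulVec_sub {A : κ → Matrix ι ι R} (hA : ∀ j, (A j).IsSymm)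
    (μ : κ → ι → R) {m : ι → R} (hm : (∑ j, A j) *ᵥ m = ∑ j, A j *ᵥ μ j) (x : ι → R) :
    ∑ j, (x - μ j) ⬝ᵥ (A j *ᵥ (x - μ j)) =
      (x - m) ⬝ᵥ ((∑ j, A j) *ᵥ (x - m)) +
        (∑ j, μ j ⬝ᵥ (A j *ᵥ μ j) - m ⬝ᵥ ((∑ j, A j) *ᵥ m)) := by
  have hB : (∑ j, A j).IsSymm := by
    simpa [IsSymm, transpose_sum] using sum_congr rfl fun j _ => (hA j).eq
  have hquad : ∑ j, x ⬝ᵥ (A j *ᵥ x) = x ⬝ᵥ ((∑ j, A j) *ᵥ x) := by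
    rw [sum_mulVec, dotProduct_sum]
  have hcross : ∑ j, x ⬝ᵥ (A j *ᵥ μ j) = x ⬝ᵥ ((∑ j, A j) *ᵥ m) := by
    rw [hm, dotProduct_sum]
  rw [sub_dotProduct_mulVec_sub_of_isSymm hB]
  simp only [sub_dotProduct_mulVec_sub_of_isSymm (hA _), sum_add_distrib, sum_sub_distrib,
    ← mul_sum, hquad, hcross]
  ring

end CompletingTheSquare

section Gaussian

variable {ι : Type*} [Fintype ι] [DecidableEq ι]

lemma gaussPDF_pos (μ : ι → ℝ) {S : Matrix ι ι ℝ} (hS : S.PosDef) (x : ι → ℝ) :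
    0 < gaussPDF μ S x := by
  have := hS.det_pos
  unfold gaussPDF
  positivity

lemma prod_gaussPDF1_eq_gaussPDF_diagonal (a σsq : ι → ℝ) (hσ : ∀ i, 0 < σsq i) (y : ι → ℝ) :
    ∏ i, gaussPDF1 (a i) (σsq i) (y i) = gaussPDF a (diagonal σsq) y := by
  have hinv : (diagonal σsq)⁻¹ = diagonal (σsq)⁻¹ := by
    refine inv_eq_right_inv ?_
    rw [diagonal_mul_diagonal, ← diagonal_one]
    exact congrArg diagonal (funext fun i => mul_inv_cancel₀ (hσ i).ne')
  unfold gaussPDF gaussPDF1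
  rw [prod_mul_distrib, ← Real.exp_sum, det_diagonal, ← Finset.card_univ, ← prod_const,
    ← prod_mul_distrib, Real.sqrt_prod _ fun i _ => by have := hσ i; positivity, prod_inv_distrib,
    hinv]
  simp only [dotProduct, mulVec_diagonal, mul_sum, Pi.sub_apply, Pi.inv_apply]
  congr 2
  exact sum_congr rfl fun i _ => by ring

lemma exists_prod_gaussPDF_eq_mul_gaussPDF {κ : Type*} [Fintype κ] [Nonempty κ]
    (μ : κ → ι → ℝ) {S : κ → Matrix ι ι ℝ} (hS : ∀ j, (S j).PosDef) :
    ∃ (m : ι → ℝ) (V : Matrix ι ι ℝ) (c : ℝ), V.PosDef ∧ 0 < c ∧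
      ∀ x, ∏ j, gaussPDF (μ j) (S j) x = c * gaussPDF m V x := by
  set B := ∑ j, (S j)⁻¹
  have hB : B.PosDef := posDef_sum univ_nonempty fun j _ => (hS j).inv
  have hBunit : IsUnit B.det := hB.det_pos.ne'.isUnit
  set m := B⁻¹ *ᵥ ∑ j, (S j)⁻¹ *ᵥ μ j
  have hm : B *ᵥ m = ∑ j, (S j)⁻¹ *ᵥ μ j := by
    rw [mulVec_mulVec, mul_nonsing_inv _ hBunit, one_mulVec]
  set r := ∑ j, μ j ⬝ᵥ ((S j)⁻¹ *ᵥ μ j) - m ⬝ᵥ (B *ᵥ m)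
  set K : Matrix ι ι ℝ → ℝ := fun M => (√((2 * Real.pi) ^ Fintype.card ι * M.det))⁻¹
  have hK : K B⁻¹ ≠ 0 := by
    have := hB.inv.det_pos
    positivity
  have hgauss : ∀ ν M y,
      gaussPDF ν M y = K M * Real.exp (-(1 / 2) * ((y - ν) ⬝ᵥ (M⁻¹ *ᵥ (y - ν)))) :=
    fun _ _ _ => rfl
  obtain ⟨c, hc⟩ : ∃ c, ∀ x, ∏ j, gaussPDF (μ j) (S j) x = c * gaussPDF m B⁻¹ x := by
    refine ⟨(∏ j, K (S j)) * Real.exp (-(1 / 2) * r) / K B⁻¹, fun x => ?_⟩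
    have hsq : ∑ j, (x - μ j) ⬝ᵥ ((S j)⁻¹ *ᵥ (x - μ j)) = (x - m) ⬝ᵥ (B *ᵥ (x - m)) + r :=
      sum_sub_dotProduct_mulVec_sub
        (fun j => isHermitian_iff_isSymm.mp (hS j).inv.isHermitian) μ hm x
    simp only [hgauss, prod_mul_distrib, ← Real.exp_sum, ← mul_sum, hsq,
      nonsing_inv_nonsing_inv _ hBunit, mul_add, Real.exp_add]
    field_simp
  refine ⟨m, B⁻¹, c, hB.inv, ?_, hc⟩
  have hprod := (hc m).symm ▸ prod_pos fun j _ => gaussPDF_pos (μ j) (hS j) m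
  exact pos_of_mul_pos_left hprod (gaussPDF_pos m hB.inv m).le

end Gaussian

lemma memLStar_of_fintype_mixture {p q : ℕ} {𝕏 : Set (Fin p → ℝ)}
    {f : (Fin p → ℝ) → (Fin q → ℝ) → ℝ} {Z : Type*} [Fintype Z] [Nonempty Z]
    (w : Z → ℝ) (hw : ∀ z, 0 < w z) (μ : Z → Fin p → ℝ) (S : Z → Matrix (Fin p) (Fin p) ℝ)
    (a : Z → Fin q → ℝ) (C : Z → Matrix (Fin q) (Fin q) ℝ) (hS : ∀ z, (S z).PosDef)
    (hC : ∀ z, (C z).PosDef)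
    (hf : ∀ x ∈ 𝕏, ∀ y, f x y = (∑ z, w z * gaussPDF (μ z) (S z) x * gaussPDF (a z) (C z) y) /
      ∑ z, w z * gaussPDF (μ z) (S z) x) :
    MemLStar 𝕏 f := by
  set e := (Fintype.equivFin Z).symm
  set W := ∑ z, w z
  have hW : 0 < W := sum_pos (fun z _ => hw z) univ_nonempty
  refine ⟨Fintype.card Z, fun k => w (e k) / W, fun k => μ (e k), fun k => S (e k),
    fun k => a (e k), fun k => C (e k), Fintype.card_pos, fun k => div_pos (hw _) hW, ?_,
    fun k => hS _, fun k => hC _, fun x hx y => ?_⟩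
  · rw [← sum_div, e.sum_comp w, div_self hW.ne']
  · rw [hf x hx y, ← sum_div]
    simp only [div_mul_eq_mul_div, ← sum_div]
    rw [e.sum_comp (fun z => w z * gaussPDF (μ z) (S z) x * gaussPDF (a z) (C z) y),
      e.sum_comp (fun z => w z * gaussPDF (μ z) (S z) x), div_div_div_cancel_right₀ hW.ne']

theorem prod_memLStarOne_memLStar {p q : ℕ} (hq : 0 < q) (𝕏 : Set (Fin p → ℝ))
    (f : Fin q → ((Fin p → ℝ) → ℝ → ℝ))
    (hf : ∀ j, MemLStarOne 𝕏 (f j)) :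
    MemLStar 𝕏 (fun x (y : Fin q → ℝ) => ∏ j, f j x (y j)) := by
  choose n π μ S a σsq hn hπ _ hS hσ hf using hf
  have : Nonempty (Fin q) := ⟨⟨0, hq⟩⟩
  have : ∀ j, Nonempty (Fin (n j)) := fun j => ⟨⟨0, hn j⟩⟩
  choose m V c hV hc hgate using fun z : ∀ j, Fin (n j) =>
    exists_prod_gaussPDF_eq_mul_gaussPDF (fun j => μ j (z j)) (fun j => hS j (z j))
  refine memLStar_of_fintype_mixture (fun z => (∏ j, π j (z j)) * c z)
    (fun z => mul_pos (prod_pos fun j _ => hπ j (z j)) (hc z)) m V (fun z j => a j (z j))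
    (fun z => diagonal fun j => σsq j (z j)) hV
    (fun z => PosDef.diagonal fun j => hσ j (z j)) fun x hx y => ?_
  simp only [hf _ x hx, ← sum_div, prod_div_distrib, Fintype.prod_sum]
  congr 1 <;> refine sum_congr rfl fun z _ => ?_
  · rw [prod_mul_distrib, prod_mul_distrib, hgate,
      prod_gaussPDF1_eq_gaussPDF_diagonal _ _ fun j => hσ j (z j)]
    ring
  · rw [prod_mul_distrib, hgate]
    ring
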